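/- arXiv:2410.22617 — 2 statements merged into one kernel-verified Lean document; each statement's English description precedes it below -/
import Mathlib

section
/- Let Δ₁ and Δ₂ be positive definite real k×k matrices, and for a positive definite Δ let f_Δ : ℝ^k → ℝ be the centered Gaussian density f_Δ(x) = (2π)^{-k/2} (det Δ)^{-1/2} exp(−xᵀ Δ⁻¹ x / 2). Then the Hellinger affinity satisfies ∫_{ℝ^k} √(f_{Δ₁}(x) f_{Δ₂}(x)) dx = (det Δ₁)^{1/4} (det Δ₂)^{1/4} / (det((Δ₁ + Δ₂)/2))^{1/2}; equivalently, the Rényi divergence −log ∫ √(f_{Δ₁} f_{Δ₂}) equals (1/2) log det((Δ₁+Δ₂)/2) − (1/4) log det Δ₁ − (1/4) log det Δ₂. -/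
/-!
The geometric mean of two centered Gaussian densities is an unnormalized Gaussian whose precision
matrix `M = (Δ₁⁻¹ + Δ₂⁻¹) / 2` is the mean of their precisions. Writing `M = Bᵀ B` and
substituting `y = B x` reduces its integral to the standard Gaussian integral, which gives
`(2π)^{k/2} (det M)^{-1/2}`; finally `Δ₁ M Δ₂ = (Δ₁ + Δ₂) / 2` expresses `det M` through
`det ((Δ₁ + Δ₂) / 2)`.
-/

open MeasureTheory

/-- The centered `k`-variate Gaussian density with covariance matrix `Δ`:
`f_Δ(x) = (2π)^{-k/2} (det Δ)^{-1/2} exp(−xᵀ Δ⁻¹ x / 2)`. -/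
noncomputable def gaussDensity {k : ℕ} (Δ : Matrix (Fin k) (Fin k) ℝ) (x : Fin k → ℝ) : ℝ :=
  (2 * Real.pi) ^ (-(k : ℝ) / 2) * Δ.det ^ (-(1 : ℝ) / 2) *
    Real.exp (-(dotProduct x (Δ⁻¹.mulVec x)) / 2)

open Real Matrix

section GaussianIntegral

variable {ι : Type*} [Fintype ι]

theorem integral_exp_neg_dotProduct_self_div_two :
    ∫ x : ι → ℝ, exp (-(x ⬝ᵥ x) / 2) = (2 * π) ^ (Fintype.card ι / 2 : ℝ) := by
  have hprod (x : ι → ℝ) : exp (-(x ⬝ᵥ x) / 2) = ∏ i, exp (-(1 / 2) * x i ^ 2) := by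
    rw [← exp_sum, dotProduct, neg_div, Finset.sum_div, ← Finset.sum_neg_distrib]
    congr! 2 with i
    ring
  simp_rw [hprod]
  rw [integral_fintype_prod_volume_eq_pow (fun t : ℝ => exp (-(1 / 2) * t ^ 2)), integral_gaussian,
    show π / (1 / 2) = 2 * π by ring, sqrt_eq_rpow, ← rpow_natCast, ← rpow_mul (by positivity)]
  ring_nf

variable [DecidableEq ι]

theorem integral_comp_mulVec {A : Matrix ι ι ℝ} (hA : A.det ≠ 0) (g : (ι → ℝ) → ℝ) :
    ∫ x, g (A *ᵥ x) = |A.det|⁻¹ * ∫ y, g y := by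
  have hemb : MeasurableEmbedding (toLin' A) :=
    (A.toLinearEquiv' (A.invertibleOfIsUnitDet hA.isUnit)).toContinuousLinearEquiv
      |>.toHomeomorph.measurableEmbedding
  rw [← smul_eq_mul, ← ENNReal.toReal_ofReal (inv_nonneg.mpr (abs_nonneg A.det)),
    ← integral_smul_measure, ← abs_inv, ← map_matrix_volume_pi_eq_smul_volume_pi hA,
    hemb.integral_map]
  simp only [toLin'_apply]

open scoped MatrixOrder in
theorem Matrix.PosDef.exists_det_ne_zero_eq_transpose_mul {M : Matrix ι ι ℝ} (hM : M.PosDef) :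
    ∃ B : Matrix ι ι ℝ, B.det ≠ 0 ∧ M = Bᵀ * B := by
  obtain ⟨B, hB, rfl⟩ :=
    CStarAlgebra.isStrictlyPositive_iff_eq_star_mul_self.mp hM.isStrictlyPositive
  exact ⟨B, (isUnit_iff_isUnit_det B).mp hB |>.ne_zero, rfl⟩

theorem integral_exp_neg_dotProduct_mulVec_div_two {M : Matrix ι ι ℝ} (hM : M.PosDef) :
    ∫ x : ι → ℝ, exp (-(x ⬝ᵥ M *ᵥ x) / 2) =
      (2 * π) ^ (Fintype.card ι / 2 : ℝ) * M.det ^ (-(1 : ℝ) / 2) := by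
  obtain ⟨B, hB, rfl⟩ := hM.exists_det_ne_zero_eq_transpose_mul
  have hquad (x : ι → ℝ) : x ⬝ᵥ (Bᵀ * B) *ᵥ x = B *ᵥ x ⬝ᵥ B *ᵥ x := by
    rw [← mulVec_mulVec, dotProduct_mulVec, vecMul_transpose]
  have habs : |B.det|⁻¹ = (Bᵀ * B).det ^ (-(1 : ℝ) / 2) := by
    rw [det_mul, det_transpose, ← sq, neg_div, rpow_neg (sq_nonneg _), ← sqrt_eq_rpow,
      sqrt_sq_eq_abs]
  simp_rw [hquad]
  rw [integral_comp_mulVec hB (fun y => exp (-(y ⬝ᵥ y) / 2)),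
    integral_exp_neg_dotProduct_self_div_two, habs, mul_comm]

end GaussianIntegral

theorem Matrix.det_mul_det_smul_inv_add_inv_mul_det {n R : Type*} [Fintype n] [DecidableEq n]
    [CommRing R] {A B : Matrix n n R} (hA : IsUnit A.det) (hB : IsUnit B.det) (c : R) :
    A.det * (c • (A⁻¹ + B⁻¹)).det * B.det = (c • (A + B)).det := by
  rw [← det_mul, ← det_mul, Matrix.mul_smul, Matrix.smul_mul, mul_add, add_mul,
    mul_nonsing_inv _ hA, nonsing_inv_mul_cancel_right _ _ hB, one_mul, add_comm]

theorem rpow_neg_quarter_mul_rpow_neg_half {a b m : ℝ} (ha : 0 < a) (hb : 0 < b) (hm : 0 < m) :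
    (a * b) ^ (-(1 : ℝ) / 4) * m ^ (-(1 : ℝ) / 2) =
      a ^ ((1 : ℝ) / 4) * b ^ ((1 : ℝ) / 4) / (a * m * b) ^ ((1 : ℝ) / 2) := by
  rw [eq_div_iff (by positivity), mul_right_comm a, mul_rpow (by positivity) hm.le,
    ← mul_rpow ha.le hb.le]
  calc (a * b) ^ (-(1 : ℝ) / 4) * m ^ (-(1 : ℝ) / 2) * ((a * b) ^ ((1 : ℝ) / 2) * m ^ ((1 : ℝ) / 2))
      = (a * b) ^ (-(1 : ℝ) / 4 + 1 / 2) * m ^ (-(1 : ℝ) / 2 + 1 / 2) := by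
        rw [rpow_add (by positivity), rpow_add hm]; ring
    _ = (a * b) ^ ((1 : ℝ) / 4) := by norm_num

theorem sqrt_gaussDensity_mul_gaussDensity {k : ℕ} {Δ₁ Δ₂ : Matrix (Fin k) (Fin k) ℝ}
    (h1 : Δ₁.PosDef) (h2 : Δ₂.PosDef) (x : Fin k → ℝ) :
    √(gaussDensity Δ₁ x * gaussDensity Δ₂ x) = (Δ₁.det * Δ₂.det) ^ (-(1 : ℝ) / 4) *
      ((2 * π) ^ (-(k : ℝ) / 2) * exp (-(x ⬝ᵥ ((2 : ℝ)⁻¹ • (Δ₁⁻¹ + Δ₂⁻¹)) *ᵥ x) / 2)) := by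
  have ha := h1.det_pos
  have hb := h2.det_pos
  have hquad : x ⬝ᵥ ((2 : ℝ)⁻¹ • (Δ₁⁻¹ + Δ₂⁻¹)) *ᵥ x = (x ⬝ᵥ Δ₁⁻¹ *ᵥ x + x ⬝ᵥ Δ₂⁻¹ *ᵥ x) / 2 := by
    rw [smul_mulVec, dotProduct_smul, add_mulVec, dotProduct_add, smul_eq_mul]; ring
  have hdet : (Δ₁.det * Δ₂.det) ^ (-(1 : ℝ) / 4) * (Δ₁.det * Δ₂.det) ^ (-(1 : ℝ) / 4) =
      Δ₁.det ^ (-(1 : ℝ) / 2) * Δ₂.det ^ (-(1 : ℝ) / 2) := by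
    rw [← rpow_add (mul_pos ha hb), ← mul_rpow ha.le hb.le]
    norm_num
  have hexp : exp (-(x ⬝ᵥ ((2 : ℝ)⁻¹ • (Δ₁⁻¹ + Δ₂⁻¹)) *ᵥ x) / 2) *
      exp (-(x ⬝ᵥ ((2 : ℝ)⁻¹ • (Δ₁⁻¹ + Δ₂⁻¹)) *ᵥ x) / 2) =
      exp (-(x ⬝ᵥ Δ₁⁻¹ *ᵥ x) / 2) * exp (-(x ⬝ᵥ Δ₂⁻¹ *ᵥ x) / 2) := by
    rw [← exp_add, ← exp_add, hquad]; ring_nf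
  rw [sqrt_eq_iff_mul_self_eq_of_pos (by positivity), gaussDensity, gaussDensity]
  grind

/-- Hellinger affinity of two centered Gaussians:
`∫ √(f_{Δ₁} f_{Δ₂}) = (det Δ₁)^{1/4} (det Δ₂)^{1/4} / (det((Δ₁+Δ₂)/2))^{1/2}`;
equivalently, the Rényi divergence `−log ∫ √(f_{Δ₁} f_{Δ₂})` equals
`(1/2) log det((Δ₁+Δ₂)/2) − (1/4) log det Δ₁ − (1/4) log det Δ₂`. -/
theorem stmt15 (k : ℕ) (Δ₁ Δ₂ : Matrix (Fin k) (Fin k) ℝ)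
    (h1 : Δ₁.PosDef) (h2 : Δ₂.PosDef) :
    (∫ x : Fin k → ℝ, Real.sqrt (gaussDensity Δ₁ x * gaussDensity Δ₂ x)) =
      Δ₁.det ^ ((1 : ℝ) / 4) * Δ₂.det ^ ((1 : ℝ) / 4) /
        (((2 : ℝ)⁻¹ • (Δ₁ + Δ₂)).det) ^ ((1 : ℝ) / 2) ∧
    -Real.log (∫ x : Fin k → ℝ, Real.sqrt (gaussDensity Δ₁ x * gaussDensity Δ₂ x)) =
      (1 / 2) * Real.log (((2 : ℝ)⁻¹ • (Δ₁ + Δ₂)).det) -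
        (1 / 4) * Real.log Δ₁.det - (1 / 4) * Real.log Δ₂.det := by
  have ha := h1.det_pos
  have hb := h2.det_pos
  have hM : ((2 : ℝ)⁻¹ • (Δ₁⁻¹ + Δ₂⁻¹)).PosDef := (h1.inv.add h2.inv).smul (by norm_num)
  have hm := hM.det_pos
  have hint : ∫ x, √(gaussDensity Δ₁ x * gaussDensity Δ₂ x) =
      (Δ₁.det * Δ₂.det) ^ (-(1 : ℝ) / 4) * ((2 : ℝ)⁻¹ • (Δ₁⁻¹ + Δ₂⁻¹)).det ^ (-(1 : ℝ) / 2) := by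
    simp_rw [sqrt_gaussDensity_mul_gaussDensity h1 h2]
    rw [integral_const_mul, integral_const_mul, integral_exp_neg_dotProduct_mulVec_div_two hM,
      Fintype.card_fin]
    congr 1
    rw [← mul_assoc, ← rpow_add (by positivity), neg_div, neg_add_cancel, rpow_zero, one_mul]
  have haffinity : ∫ x, √(gaussDensity Δ₁ x * gaussDensity Δ₂ x) =
      Δ₁.det ^ ((1 : ℝ) / 4) * Δ₂.det ^ ((1 : ℝ) / 4) /
        ((2 : ℝ)⁻¹ • (Δ₁ + Δ₂)).det ^ ((1 : ℝ) / 2) := by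
    rw [hint, rpow_neg_quarter_mul_rpow_neg_half ha hb hm,
      det_mul_det_smul_inv_add_inv_mul_det ha.ne'.isUnit hb.ne'.isUnit]
  have hd : 0 < ((2 : ℝ)⁻¹ • (Δ₁ + Δ₂)).det := (h1.add h2).smul (by norm_num) |>.det_pos
  refine ⟨haffinity, ?_⟩
  rw [haffinity, log_div (by positivity) (by positivity), log_mul (by positivity) (by positivity),
    log_rpow ha, log_rpow hb, log_rpow hd]
  ring
end

section
/- Let Δ₁ and Δ₂ be positive definite real k×k matrices such that 2Δ₁ − Δ₂ is positive definite, and for a positive definite Δ let f_Δ : ℝ^k → ℝ be the centered Gaussian density f_Δ(x) = (2π)^{-k/2} (det Δ)^{-1/2} exp(−xᵀ Δ⁻¹ x / 2). Then the expected squared likelihood ratio satisfies ∫_{ℝ^k} (f_{Δ₂}(x))² / f_{Δ₁}(x) dx = det Δ₁ / √( det Δ₂ · det(2Δ₁ − Δ₂) ). -/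
/-!
Since `f_{Δ₂}² / f_{Δ₁}` is, up to a constant, `exp (-xᵀ M x / 2)` with `M = 2Δ₂⁻¹ − Δ₁⁻¹`, the
integral is a Gaussian integral. The hypothesis on `2Δ₁ − Δ₂` makes `M` positive definite
(inversion reverses the Loewner order), and `M = Δ₂⁻¹ (2Δ₁ − Δ₂) Δ₁⁻¹` gives its determinant.
The Gaussian integral itself is computed by diagonalising `M` with an orthogonal matrix, which
preserves Lebesgue measure, and applying Fubini to the resulting product of one-dimensional
Gaussians.
-/

open MeasureTheory Matrix

namespace Matrix

variable {n : Type*} [Fintype n] [DecidableEq n]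

theorem inv_mul_smul_sub_mul_inv {K : Type*} [Field K] {A B : Matrix n n K}
    (hA : IsUnit A.det) (hB : IsUnit B.det) (c : K) :
    B⁻¹ * (c • A - B) * A⁻¹ = c • B⁻¹ - A⁻¹ := by
  rw [Matrix.mul_sub, Matrix.sub_mul, Matrix.mul_smul, Matrix.smul_mul, Matrix.mul_assoc,
    mul_nonsing_inv _ hA, nonsing_inv_mul _ hB, Matrix.mul_one, Matrix.one_mul]

theorem det_smul_inv_sub_inv {K : Type*} [Field K] {A B : Matrix n n K}
    (hA : A.det ≠ 0) (hB : B.det ≠ 0) (c : K) :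
    (c • B⁻¹ - A⁻¹).det = (c • A - B).det / (A.det * B.det) := by
  rw [← inv_mul_smul_sub_mul_inv hA.isUnit hB.isUnit, det_mul, det_mul, det_nonsing_inv,
    det_nonsing_inv, Ring.inverse_eq_inv, Ring.inverse_eq_inv]
  field_simp

theorem PosDef.inv_sub_inv {K : Type*} [Field K] [PartialOrder K] [StarRing K] [AddLeftMono K]
    {A B : Matrix n n K} (hB : B.PosDef) (hAB : (A - B).PosDef) : (B⁻¹ - A⁻¹).PosDef := by
  set C := A - B
  have hA : A.PosDef := by simpa [C] using hB.add hAB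
  have hAdet := (isUnit_iff_isUnit_det A).mp hA.isUnit
  have hBdet := (isUnit_iff_isUnit_det B).mp hB.isUnit
  have hCdet := (isUnit_iff_isUnit_det C).mp hAB.isUnit
  have hN : (B + B * C⁻¹ * B).PosDef := by
    have := hAB.inv.conjTranspose_mul_mul_same (mulVec_injective_iff_isUnit.mpr hB.isUnit)
    rw [hB.isHermitian.eq] at this
    exact hB.add this
  suffices (B + B * C⁻¹ * B) * (B⁻¹ - A⁻¹) = 1 by
    rw [← inv_eq_right_inv this]
    exact hN.inv
  have hN_eq : B + B * C⁻¹ * B = A * C⁻¹ * B := by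
    rw [show A = C + B by simp [C], Matrix.add_mul, Matrix.add_mul, mul_nonsing_inv _ hCdet,
      Matrix.one_mul, add_comm]
  rw [← one_smul K B⁻¹, ← inv_mul_smul_sub_mul_inv hAdet hBdet, one_smul, hN_eq]
  simp only [Matrix.mul_assoc]
  rw [mul_nonsing_inv_cancel_left _ _ hBdet, nonsing_inv_mul_cancel_left _ _ hCdet,
    mul_nonsing_inv _ hAdet]

theorem PosDef.smul_inv_sub_inv {A B : Matrix n n ℝ} (hA : A.PosDef) (hB : B.PosDef) {c : ℝ}
    (hc : 0 < c) (h : (c • A - B).PosDef) : (c • B⁻¹ - A⁻¹).PosDef := by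
  have hinv : (c • A)⁻¹ = c⁻¹ • A⁻¹ := by
    refine inv_eq_right_inv ?_
    rw [Matrix.smul_mul, Matrix.mul_smul, smul_smul, mul_inv_cancel₀ hc.ne', one_smul,
      mul_nonsing_inv _ ((isUnit_iff_isUnit_det A).mp hA.isUnit)]
  have := (hB.inv_sub_inv h).smul hc
  rwa [hinv, smul_sub, smul_smul, mul_inv_cancel₀ hc.ne', one_smul] at this

theorem measurePreserving_mulVec_of_abs_det_eq_one {U : Matrix n n ℝ} (hU : |U.det| = 1) :
    MeasurePreserving (U *ᵥ ·) (volume : Measure (n → ℝ)) volume := by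
  have hdet : LinearMap.det (toLin' U) ≠ 0 := by
    rw [LinearMap.det_toLin']
    intro h
    simp [h] at hU
  refine ⟨(toLin' U).continuous_of_finiteDimensional.measurable, ?_⟩
  have := Measure.map_linearMap_addHaar_pi_eq_smul_addHaar hdet volume
  rwa [LinearMap.det_toLin', abs_inv, hU, inv_one, ENNReal.ofReal_one, one_smul] at this

theorem abs_det_of_mem_unitaryGroup {U : Matrix n n ℝ} (hU : U ∈ unitaryGroup n ℝ) :
    |U.det| = 1 := by
  simpa only [Real.norm_eq_abs] using CStarRing.norm_of_mem_unitary (det_of_mem_unitary hU)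

theorem IsHermitian.dotProduct_mulVec_self_eq_sum {A : Matrix n n ℝ} (hA : A.IsHermitian)
    (x : n → ℝ) : x ⬝ᵥ A *ᵥ x =
      ∑ i, hA.eigenvalues i * (star (hA.eigenvectorUnitary : Matrix n n ℝ) *ᵥ x) i ^ 2 := by
  set U : Matrix n n ℝ := ↑hA.eigenvectorUnitary
  have hspec : A = U * diagonal hA.eigenvalues * star U := by simpa using hA.spectral_theorem
  conv_lhs => rw [hspec]
  rw [← mulVec_mulVec, ← mulVec_mulVec, dotProduct_mulVec, ← mulVec_transpose,
    ← conjTranspose_eq_transpose_of_trivial, ← star_eq_conjTranspose, dotProduct]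
  exact Finset.sum_congr rfl fun i _ => by rw [mulVec_diagonal]; ring

end Matrix

theorem integral_exp_neg_sum_mul_sq {ι : Type*} [Fintype ι] {c : ι → ℝ} (hc : ∀ i, 0 < c i) :
    ∫ y : ι → ℝ, Real.exp (-(∑ i, c i * y i ^ 2) / 2) =
      √((2 * Real.pi) ^ Fintype.card ι / ∏ i, c i) := by
  have hprod (y : ι → ℝ) :
      Real.exp (-(∑ i, c i * y i ^ 2) / 2) = ∏ i, Real.exp (-(c i / 2) * y i ^ 2) := by
    rw [← Real.exp_sum, neg_div, Finset.sum_div, ← Finset.sum_neg_distrib]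
    congr 1; congr 1 with i
    ring
  have hfactor (i : ι) : ∫ t : ℝ, Real.exp (-(c i / 2) * t ^ 2) = √(2 * Real.pi / c i) := by
    rw [integral_gaussian, div_div_eq_mul_div, mul_comm]
  simp_rw [hprod]
  rw [integral_fintype_prod_volume_eq_prod (f := fun i t => Real.exp (-(c i / 2) * t ^ 2))]
  simp_rw [hfactor]
  rw [← Real.sqrt_prod _ (fun i _ => (div_pos (by positivity) (hc i)).le), Finset.prod_div_distrib,
    Finset.prod_const, Finset.card_univ]

theorem Matrix.PosDef.integral_exp_neg_dotProduct_mulVec_self {ι : Type*} [Fintype ι]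
    [DecidableEq ι] {M : Matrix ι ι ℝ} (hM : M.PosDef) :
    ∫ x : ι → ℝ, Real.exp (-(x ⬝ᵥ M *ᵥ x) / 2) = √((2 * Real.pi) ^ Fintype.card ι / M.det) := by
  set d := hM.isHermitian.eigenvalues
  have hU := measurePreserving_mulVec_of_abs_det_eq_one
    (abs_det_of_mem_unitaryGroup (Unitary.star_mem hM.isHermitian.eigenvectorUnitary.2))
  have hchange := integral_map (μ := volume) hU.measurable.aemeasurable
    (f := fun y => Real.exp (-(∑ i, d i * y i ^ 2) / 2))
    (by fun_prop : Continuous _).aestronglyMeasurable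
  rw [hU.map_eq] at hchange
  simp_rw [hM.isHermitian.dotProduct_mulVec_self_eq_sum]
  rw [← hchange, integral_exp_neg_sum_mul_sq hM.eigenvalues_pos,
    hM.isHermitian.det_eq_prod_eigenvalues]
  rfl

theorem Real.rpow_neg_one_div_two {x : ℝ} (hx : 0 ≤ x) : x ^ (-(1 : ℝ) / 2) = (√x)⁻¹ := by
  rw [neg_div, Real.rpow_neg hx, Real.sqrt_eq_rpow]

theorem gaussDensity_eq_exp_div_sqrt {k : ℕ} {Δ : Matrix (Fin k) (Fin k) ℝ} (hΔ : 0 < Δ.det)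
    (x : Fin k → ℝ) :
    gaussDensity Δ x = Real.exp (-(x ⬝ᵥ Δ⁻¹ *ᵥ x) / 2) / √((2 * Real.pi) ^ k * Δ.det) := by
  have h2π : (2 * Real.pi) ^ (-(k : ℝ) / 2) = (√((2 * Real.pi) ^ k))⁻¹ := by
    rw [← Real.rpow_neg_one_div_two (by positivity), ← Real.rpow_natCast,
      ← Real.rpow_mul (by positivity)]
    ring_nf
  rw [gaussDensity, h2π, Real.rpow_neg_one_div_two hΔ.le, Real.sqrt_mul (by positivity)]
  field_simp

theorem gaussDensity_sq_div_gaussDensity {k : ℕ} {Δ₁ Δ₂ : Matrix (Fin k) (Fin k) ℝ}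
    (h1 : 0 < Δ₁.det) (h2 : 0 < Δ₂.det) (x : Fin k → ℝ) :
    gaussDensity Δ₂ x ^ 2 / gaussDensity Δ₁ x =
      √((2 * Real.pi) ^ k * Δ₁.det) / ((2 * Real.pi) ^ k * Δ₂.det) *
        Real.exp (-(x ⬝ᵥ ((2 : ℝ) • Δ₂⁻¹ - Δ₁⁻¹) *ᵥ x) / 2) := by
  have hexp : Real.exp (-(x ⬝ᵥ ((2 : ℝ) • Δ₂⁻¹ - Δ₁⁻¹) *ᵥ x) / 2) =
      Real.exp (-(x ⬝ᵥ Δ₂⁻¹ *ᵥ x) / 2) ^ 2 / Real.exp (-(x ⬝ᵥ Δ₁⁻¹ *ᵥ x) / 2) := by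
    rw [sub_mulVec, smul_mulVec, dotProduct_sub, dotProduct_smul, smul_eq_mul,
      ← Real.exp_nat_mul, ← Real.exp_sub]
    ring_nf
  rw [gaussDensity_eq_exp_div_sqrt h1, gaussDensity_eq_exp_div_sqrt h2, hexp, div_pow,
    Real.sq_sqrt (by positivity)]
  field_simp

/-- Expected squared likelihood ratio of two centered Gaussians: if
`2Δ₁ − Δ₂` is positive definite then
`∫ f_{Δ₂}² / f_{Δ₁} = det Δ₁ / √(det Δ₂ · det(2Δ₁ − Δ₂))`. -/
theorem stmt18 (k : ℕ) (Δ₁ Δ₂ : Matrix (Fin k) (Fin k) ℝ)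
    (h1 : Δ₁.PosDef) (h2 : Δ₂.PosDef) (h12 : ((2 : ℝ) • Δ₁ - Δ₂).PosDef) :
    (∫ x : Fin k → ℝ, (gaussDensity Δ₂ x) ^ 2 / gaussDensity Δ₁ x) =
      Δ₁.det / Real.sqrt (Δ₂.det * ((2 : ℝ) • Δ₁ - Δ₂).det) := by
  simp_rw [gaussDensity_sq_div_gaussDensity h1.det_pos h2.det_pos]
  rw [integral_const_mul,
    (h1.smul_inv_sub_inv h2 two_pos h12).integral_exp_neg_dotProduct_mulVec_self,
    det_smul_inv_sub_inv h1.det_pos.ne' h2.det_pos.ne', Fintype.card_fin]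
  set c := (2 * Real.pi) ^ k
  set a := Δ₁.det
  set b := Δ₂.det
  set s := ((2 : ℝ) • Δ₁ - Δ₂).det
  have ha : 0 < a := h1.det_pos
  have hb : 0 < b := h2.det_pos
  have hs : 0 < s := h12.det_pos
  have hc : 0 < c := by positivity
  have hsq : √(c * a) * √(c / (s / (a * b))) = c * a * √(b / s) := by
    rw [show c / (s / (a * b)) = c * a * (b / s) by field_simp,
      Real.sqrt_mul (x := c * a) (by positivity), ← mul_assoc, Real.mul_self_sqrt (by positivity)]
  rw [div_mul_eq_mul_div, hsq, Real.sqrt_div hb.le, Real.sqrt_mul hb.le]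
  field_simp
  rw [Real.sq_sqrt hb.le]
end
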